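/- For any connected undirected graph G on n ≥ 2 vertices: (n-1)²/(2d̃(G)n²) ≤ H*(G) ≤ δ̃(G)(n-1)/(4n), where d̃(G) is the average degree and δ̃(G) is the average pairwise distance. -/

import Mathlib

open Finset Matrix Filter

/-- Eigenvalues (unordered) of the unweighted Laplacian of `G`. -/
noncomputable def lapEigs {n : ℕ} (G : SimpleGraph (Fin n)) : Fin n → ℝ :=
  letI := Classical.decRel G.Adj
  (SimpleGraph.posSemidef_lapMatrix ℝ G).isHermitian.eigenvalues

/-- Eigenvalues of the Laplacian sorted in increasing order:
`sortedLapEigs G 0 = λ₁ ≤ sortedLapEigs G 1 = λ₂ ≤ ...`. -/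
noncomputable def sortedLapEigs {n : ℕ} (G : SimpleGraph (Fin n)) : Fin n → ℝ :=
  lapEigs G ∘ Tuple.sort (lapEigs G)

/-- Structural vulnerability `H*(G) = (1/(2n)) ∑_{i=2}^n 1/λᵢ`. Since `(0:ℝ)⁻¹ = 0` in Lean,
summing `(λᵢ)⁻¹` over all eigenvalues skips the single zero eigenvalue of a connected graph. -/
noncomputable def Hstar {n : ℕ} (G : SimpleGraph (Fin n)) : ℝ :=
  (1 / (2 * n)) * ∑ i, (lapEigs G i)⁻¹

/-- Kirchhoff index `K_f(G) = n ∑_{i=2}^n 1/λᵢ` (spectral formula, valid for connected graphs). -/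
noncomputable def Kf {n : ℕ} (G : SimpleGraph (Fin n)) : ℝ :=
  (n : ℝ) * ∑ i, (lapEigs G i)⁻¹

/-- Average degree `d̃(G) = (∑ᵥ dᵥ)/n = 2|E|/n`. -/
noncomputable def avgDeg {V : Type*} [Fintype V] (G : SimpleGraph V) : ℝ :=
  letI := Classical.decRel G.Adj
  (∑ v, (G.degree v : ℝ)) / Fintype.card V

/-- Sum of pairwise shortest-path distances `∑_{i<j} δ_{ij}`. -/
noncomputable def distSum {n : ℕ} (G : SimpleGraph (Fin n)) : ℝ :=
  ∑ p ∈ Finset.univ.filter (fun p : Fin n × Fin n => p.1 < p.2), (G.dist p.1 p.2 : ℝ)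

/-- Average pairwise distance `δ̃(G) = (2/(n²-n)) ∑_{i<j} δ_{ij}`. -/
noncomputable def avgDist {n : ℕ} (G : SimpleGraph (Fin n)) : ℝ :=
  (2 / ((n : ℝ)^2 - n)) * distSum G

/-- The star graph on `Fin n`: vertex `0` is adjacent to every other vertex. -/
noncomputable def starGraph (n : ℕ) : SimpleGraph (Fin n) :=
  SimpleGraph.fromRel (fun i _ => i.val = 0)

/-!
Lower bound: a connected graph has exactly `n - 1` nonzero Laplacian eigenvalues, all positive,
and their sum is `tr L = n d̃`; Cauchy–Schwarz gives `(n - 1)² ≤ (∑ λᵢ) (∑ λᵢ⁻¹)`.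

Upper bound: `n ∑ λᵢ⁻¹` is the Kirchhoff index `∑_{i<j} Rᵢⱼ`, where
`Rᵢⱼ = (eᵢ - eⱼ)ᵀ L⁺ (eᵢ - eⱼ)` is the effective resistance, and `Rᵢⱼ ≤ δᵢⱼ`: the potential
`x = L⁺ (eᵢ - eⱼ)` has `xᵢ - xⱼ = xᵀ L x = Rᵢⱼ` (as `L⁺ L L⁺ = L⁺`), and Cauchy–Schwarz along a
shortest `i`–`j` path bounds `(xᵢ - xⱼ)²` by `δᵢⱼ · xᵀ L x`, i.e. `Rᵢⱼ² ≤ δᵢⱼ Rᵢⱼ`.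
-/

open SimpleGraph

lemma List.sq_sum_map_le_length_mul_sum_map_sq {α R : Type*} [Semiring R] [LinearOrder R]
    [IsStrictOrderedRing R] [ExistsAddOfLE R] (l : List α) (f : α → R) :
    (l.map f).sum ^ 2 ≤ l.length * (l.map fun a => f a ^ 2).sum := by
  rw [← Fin.sum_univ_fun_getElem, ← Fin.sum_univ_fun_getElem]
  simpa using sq_sum_le_card_mul_sum_sq (s := univ) (f := fun i : Fin l.length => f l[i])

lemma Finset.sq_card_filter_ne_zero_le_sum_mul_sum_inv {ι R : Type*} [Field R] [LinearOrder R]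
    [IsStrictOrderedRing R] (s : Finset ι) {f : ι → R} (hf : ∀ i ∈ s, 0 ≤ f i) :
    (#{i ∈ s | f i ≠ 0} : R) ^ 2 ≤ (∑ i ∈ s, f i) * ∑ i ∈ s, (f i)⁻¹ := by
  calc (#{i ∈ s | f i ≠ 0} : R) ^ 2 = (∑ i ∈ s with f i ≠ 0, 1) ^ 2 := by
        rw [card_eq_sum_ones, Nat.cast_sum, Nat.cast_one]
    _ ≤ (∑ i ∈ s with f i ≠ 0, f i) * ∑ i ∈ s with f i ≠ 0, (f i)⁻¹ := by
        refine sum_sq_le_sum_mul_sum_of_sq_le_mul _ (fun i hi => hf i (mem_filter.1 hi).1)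
          (fun i hi => inv_nonneg.2 (hf i (mem_filter.1 hi).1)) fun i hi => ?_
        rw [one_pow, mul_inv_cancel₀ (mem_filter.1 hi).2]
    _ = (∑ i ∈ s, f i) * ∑ i ∈ s, (f i)⁻¹ := by
        rw [sum_filter_ne_zero, sum_filter_of_ne (p := (f · ≠ 0)) fun i _ h hi => h (by simp [hi])]

lemma Finset.two_nsmul_sum_filter_lt {α M : Type*} [Fintype α] [LinearOrder α] [AddCommMonoid M]
    {f : α → α → M} (hsymm : ∀ i j, f i j = f j i) (hdiag : ∀ i, f i i = 0) :
    2 • ∑ p ∈ univ.filter (fun p : α × α => p.1 < p.2), f p.1 p.2 = ∑ i, ∑ j, f i j := by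
  have hsplit : ∀ i j, f i j = (if i < j then f i j else 0) + if j < i then f j i else 0 := by
    intro i j
    rcases lt_trichotomy i j with h | rfl | h
    · simp [h, h.not_gt]
    · simp [hdiag]
    · simp [h, h.not_gt, hsymm i j]
  rw [sum_filter, Fintype.sum_prod_type, two_nsmul]
  conv_rhs => enter [2, i, 2, j]; rw [hsplit]
  simp only [sum_add_distrib]
  rw [sum_comm (f := fun i j => if j < i then f j i else 0)]

namespace Matrix.IsHermitian

variable {ι : Type*} [Fintype ι] [DecidableEq ι] {A : Matrix ι ι ℝ}

lemma trace_cfc (hA : A.IsHermitian) (f : ℝ → ℝ) :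
    (cfc f A).trace = ∑ i, f (hA.eigenvalues i) := by
  rw [hA.cfc_eq, IsHermitian.cfc, Unitary.conjStarAlgAut_apply, trace_mul_cycle,
    Unitary.coe_star_mul_self, one_mul, trace_diagonal]
  rfl

lemma posSemidef_cfc (hA : A.IsHermitian) {f : ℝ → ℝ} (hf : ∀ i, 0 ≤ f (hA.eigenvalues i)) :
    (cfc f A).PosSemidef := by
  rw [hA.cfc_eq, IsHermitian.cfc, Unitary.conjStarAlgAut_apply, star_eq_conjTranspose]
  exact (posSemidef_diagonal_iff.mpr hf).mul_mul_conjTranspose_same _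

lemma cfc_inv_mul_self_mul_cfc_inv (hA : A.IsHermitian) :
    cfc (·⁻¹ : ℝ → ℝ) A * A * cfc (·⁻¹ : ℝ → ℝ) A = cfc (·⁻¹ : ℝ → ℝ) A := by
  have hc := fun f : ℝ → ℝ => A.finite_real_spectrum.continuousOn f
  conv_lhs => enter [1, 2]; rw [← cfc_id' ℝ A hA.isSelfAdjoint]
  rw [← cfc_mul _ _ _ (hc _) (hc _), ← cfc_mul _ _ _ (hc _) (hc _)]
  refine cfc_congr fun x _ => ?_
  rcases eq_or_ne x 0 with rfl | hx
  · simp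
  · field_simp

lemma cfc_inv_mulVec_eq_zero (hA : A.IsHermitian) {v : ι → ℝ} (hv : A *ᵥ v = 0) :
    cfc (·⁻¹ : ℝ → ℝ) A *ᵥ v = 0 := by
  have hc := fun f : ℝ → ℝ => A.finite_real_spectrum.continuousOn f
  have hfactor : cfc (·⁻¹ : ℝ → ℝ) A = cfc (fun x : ℝ => x⁻¹ ^ 2) A * A := by
    conv_rhs => enter [2]; rw [← cfc_id' ℝ A hA.isSelfAdjoint]
    rw [← cfc_mul _ _ _ (hc _) (hc _)]
    refine cfc_congr fun x _ => ?_
    rcases eq_or_ne x 0 with rfl | hx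
    · simp
    · field_simp
  rw [hfactor, ← mulVec_mulVec, hv, mulVec_zero]

end Matrix.IsHermitian

namespace SimpleGraph

lemma Walk.sum_darts_sub {V M : Type*} [AddCommGroup M] {G : SimpleGraph V} (x : V → M)
    {u v : V} (p : G.Walk u v) : (p.darts.map fun d => x d.fst - x d.snd).sum = x u - x v := by
  induction p with
  | nil => simp
  | cons h q ih => simp [ih]

lemma Walk.IsTrail.two_mul_sum_darts_le {V : Type*} {G : SimpleGraph V} [Fintype G.Dart]
    {u v : V} {p : G.Walk u v} (hp : p.IsTrail) {f : G.Dart → ℝ} (hf : ∀ d, 0 ≤ f d)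
    (hsymm : ∀ d, f d.symm = f d) :
    2 * (p.darts.map f).sum ≤ ∑ d, f d := by
  classical
  have hE := hp.edges_nodup
  have hnodup : (p.darts ++ p.darts.map Dart.symm).Nodup := by
    refine List.nodup_append.2 ⟨hE.of_map _, (hE.of_map _).map Dart.symm_involutive.injective, ?_⟩
    rintro d hd _ hd' rfl
    obtain ⟨e, he, rfl⟩ := List.mem_map.1 hd'
    exact e.symm_ne (List.inj_on_of_nodup_map hE hd he (Dart.edge_symm e))
  calc 2 * (p.darts.map f).sum = ((p.darts ++ p.darts.map Dart.symm).map f).sum := by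
        simp [Function.comp_def, hsymm, two_mul]
    _ = ∑ d ∈ (p.darts ++ p.darts.map Dart.symm).toFinset, f d :=
        (List.sum_toFinset f hnodup).symm
    _ ≤ ∑ d, f d := sum_le_univ_sum_of_nonneg hf

lemma sum_darts_eq_sum_adj {V : Type*} [Fintype V] {G : SimpleGraph V} [DecidableRel G.Adj]
    (f : V → V → ℝ) :
    ∑ d : G.Dart, f d.fst d.snd = ∑ i, ∑ j, if G.Adj i j then f i j else 0 := by
  rw [← Fintype.sum_prod_type', ← sum_filter]
  exact sum_bij' (fun d _ => d.toProd) (fun p hp => ⟨p, (mem_filter.1 hp).2⟩)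
    (fun d _ => by simp [d.adj]) (fun _ _ => mem_univ _) (fun _ _ => rfl) (fun _ _ => rfl)
    fun _ _ => rfl

variable {V : Type*} [Fintype V] [DecidableEq V] {G : SimpleGraph V} [DecidableRel G.Adj]

lemma dotProduct_lapMatrix_mulVec (x : V → ℝ) :
    x ⬝ᵥ (G.lapMatrix ℝ *ᵥ x) = (∑ d : G.Dart, (x d.fst - x d.snd) ^ 2) / 2 := by
  rw [← toLinearMap₂'_apply', lapMatrix_toLinearMap₂',
    ← sum_darts_eq_sum_adj fun a b => (x a - x b) ^ 2]

lemma Walk.IsTrail.sq_sub_le_length_mul {u v : V} {p : G.Walk u v} (hp : p.IsTrail)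
    (x : V → ℝ) : (x u - x v) ^ 2 ≤ p.length * (x ⬝ᵥ (G.lapMatrix ℝ *ᵥ x)) := by
  have htrail := hp.two_mul_sum_darts_le (f := fun d => (x d.fst - x d.snd) ^ 2)
    (fun _ => sq_nonneg _) fun d => by
      simp only [Dart.symm_toProd, Prod.fst_swap, Prod.snd_swap]
      ring
  calc (x u - x v) ^ 2 = (p.darts.map fun d => x d.fst - x d.snd).sum ^ 2 := by
        rw [p.sum_darts_sub]
    _ ≤ p.darts.length * (p.darts.map fun d => (x d.fst - x d.snd) ^ 2).sum :=
        List.sq_sum_map_le_length_mul_sum_map_sq _ _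
    _ ≤ p.length * (x ⬝ᵥ (G.lapMatrix ℝ *ᵥ x)) := by
        rw [Walk.length_darts, dotProduct_lapMatrix_mulVec]
        gcongr
        linarith

lemma trace_lapMatrix {R : Type*} [Ring R] : (G.lapMatrix R).trace = ∑ v, (G.degree v : R) := by
  rw [lapMatrix, trace_sub, trace_adjMatrix, sub_zero, degMatrix, trace_diagonal]

lemma Connected.rank_lapMatrix (hG : G.Connected) :
    (G.lapMatrix ℝ).rank = Fintype.card V - 1 := by
  have hcomp : Fintype.card G.ConnectedComponent = 1 :=
    le_antisymm
      (Fintype.card_le_one_iff_subsingleton.2 hG.preconnected.subsingleton_connectedComponent)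
      (Fintype.card_pos_iff.2 (hG.nonempty.map G.connectedComponentMk))
  have := LinearMap.finrank_range_add_finrank_ker (G.lapMatrix ℝ).toLin'
  rw [Module.finrank_fintype_fun_eq_card, ← card_connectedComponent_eq_finrank_ker_toLin'_lapMatrix,
    hcomp] at this
  rw [rank, ← toLin'_apply']
  omega

lemma sq_card_sub_one_le_sum_degree_mul_sum_inv (hG : G.Connected) :
    ((Fintype.card V : ℝ) - 1) ^ 2 ≤
      (∑ v, (G.degree v : ℝ)) * ∑ i, ((G.isHermitian_lapMatrix ℝ).eigenvalues i)⁻¹ := by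
  have hL := G.isHermitian_lapMatrix ℝ
  have hcard : #{i | hL.eigenvalues i ≠ 0} = Fintype.card V - 1 := by
    rw [← Fintype.card_subtype, ← hL.rank_eq_card_non_zero_eigs, hG.rank_lapMatrix]
  have htrace : ∑ i, hL.eigenvalues i = ∑ v, (G.degree v : ℝ) := by
    simpa using hL.trace_eq_sum_eigenvalues.symm.trans trace_lapMatrix
  have := sq_card_filter_ne_zero_le_sum_mul_sum_inv univ
    fun i _ => (posSemidef_lapMatrix ℝ G).eigenvalues_nonneg i
  rwa [hcard, Nat.cast_sub (Fintype.card_pos_iff.2 hG.nonempty), Nat.cast_one, htrace] at this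

variable (G) in
/-- The Moore–Penrose pseudo-inverse `L⁺` of the Laplacian: `(·⁻¹)` sends the zero eigenvalue
to `0⁻¹ = 0`. -/
noncomputable def lapPinv : Matrix V V ℝ := cfc (·⁻¹ : ℝ → ℝ) (G.lapMatrix ℝ)

lemma isSymm_lapPinv : G.lapPinv.IsSymm :=
  isHermitian_iff_isSymm.1 (cfc_predicate _ _)

variable (G) in
noncomputable def resistance (i j : V) : ℝ :=
  (Pi.single i 1 - Pi.single j 1) ⬝ᵥ (G.lapPinv *ᵥ (Pi.single i 1 - Pi.single j 1))

lemma resistance_eq (i j : V) :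
    G.resistance i j = G.lapPinv i i + G.lapPinv j j - 2 * G.lapPinv i j := by
  simp only [resistance, mulVec_sub, mulVec_single_one, sub_dotProduct, dotProduct_sub,
    single_dotProduct, one_mul, col_apply, isSymm_lapPinv.apply i j]
  ring

lemma resistance_comm (i j : V) : G.resistance i j = G.resistance j i := by
  rw [resistance_eq, resistance_eq, isSymm_lapPinv.apply i j]
  ring

lemma resistance_self (i : V) : G.resistance i i = 0 := by
  rw [resistance_eq]
  ring

lemma sum_sum_resistance :
    ∑ i, ∑ j, G.resistance i j = 2 * Fintype.card V * G.lapPinv.trace := by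
  have hker : G.lapPinv *ᵥ (fun _ => 1) = 0 :=
    (G.isHermitian_lapMatrix ℝ).cfc_inv_mulVec_eq_zero G.lapMatrix_mulVec_const_eq_zero
  have hsum : ∑ i, ∑ j, G.lapPinv i j = 0 := by
    simpa [mulVec, dotProduct] using congrArg (fun v => ∑ i, v i) hker
  simp only [resistance_eq, sum_add_distrib, sum_sub_distrib, ← mul_sum, sum_const, card_univ,
    nsmul_eq_mul, hsum, trace, Matrix.diag]
  ring

lemma resistance_le_dist (hG : G.Connected) (i j : V) : G.resistance i j ≤ G.dist i j := by
  set b : V → ℝ := Pi.single i 1 - Pi.single j 1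
  set x := G.lapPinv *ᵥ b with hx_def
  have hdiff : x i - x j = G.resistance i j := by
    simp [resistance, x, b, sub_dotProduct, single_dotProduct]
  have henergy : x ⬝ᵥ (G.lapMatrix ℝ *ᵥ x) = G.resistance i j := by
    have hx : x = b ᵥ* G.lapPinv := by rw [hx_def, ← vecMul_transpose, isSymm_lapPinv.eq]
    rw [mulVec_mulVec, dotProduct_mulVec, hx, vecMul_vecMul, ← dotProduct_mulVec, ← mul_assoc,
      lapPinv, (G.isHermitian_lapMatrix ℝ).cfc_inv_mul_self_mul_cfc_inv]
    rfl
  have hR : 0 ≤ G.resistance i j :=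
    ((G.isHermitian_lapMatrix ℝ).posSemidef_cfc fun k =>
      inv_nonneg.2 ((posSemidef_lapMatrix ℝ G).eigenvalues_nonneg k)).dotProduct_mulVec_nonneg b
  obtain ⟨p, hp, hlen⟩ := hG.exists_path_of_dist i j
  have hpath := hp.isTrail.sq_sub_le_length_mul x
  rw [hdiff, henergy, hlen] at hpath
  nlinarith

end SimpleGraph

lemma avgDeg_nonneg {V : Type*} [Fintype V] (G : SimpleGraph V) : 0 ≤ avgDeg G := by
  unfold avgDeg
  positivity

lemma card_mul_avgDeg {V : Type*} [Fintype V] [Nonempty V] (G : SimpleGraph V)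
    [DecidableRel G.Adj] : Fintype.card V * avgDeg G = ∑ v, (G.degree v : ℝ) := by
  rw [avgDeg, mul_div_cancel₀ _ (by positivity)]
  congr!

section LaplacianSpectrum

variable {n : ℕ}

lemma lapEigs_eq_eigenvalues (G : SimpleGraph (Fin n)) [DecidableRel G.Adj] :
    lapEigs G = (G.isHermitian_lapMatrix ℝ).eigenvalues := by
  unfold lapEigs
  congr!

lemma lapEigs_nonneg (G : SimpleGraph (Fin n)) (i : Fin n) : 0 ≤ lapEigs G i := by
  classical
  rw [lapEigs_eq_eigenvalues]
  exact (posSemidef_lapMatrix ℝ G).eigenvalues_nonneg i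

lemma Hstar_nonneg (G : SimpleGraph (Fin n)) : 0 ≤ Hstar G :=
  mul_nonneg (by positivity) (sum_nonneg fun i _ => inv_nonneg.2 (lapEigs_nonneg G i))

lemma Kf_eq_sum_resistance (G : SimpleGraph (Fin n)) [DecidableRel G.Adj] :
    Kf G = ∑ p ∈ univ.filter (fun p : Fin n × Fin n => p.1 < p.2), G.resistance p.1 p.2 := by
  have h := two_nsmul_sum_filter_lt (f := G.resistance) resistance_comm resistance_self
  rw [sum_sum_resistance, lapPinv, (G.isHermitian_lapMatrix ℝ).trace_cfc, Fintype.card_fin,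
    nsmul_eq_mul] at h
  rw [Kf, lapEigs_eq_eigenvalues]
  linarith

lemma Kf_le_distSum {G : SimpleGraph (Fin n)} (hG : G.Connected) : Kf G ≤ distSum G := by
  classical
  rw [Kf_eq_sum_resistance, distSum]
  exact sum_le_sum fun p _ => resistance_le_dist hG p.1 p.2

lemma sq_sub_one_le_mul_avgDeg_mul_sum_inv_lapEigs {G : SimpleGraph (Fin n)} (hG : G.Connected) :
    ((n : ℝ) - 1) ^ 2 ≤ n * avgDeg G * ∑ i, (lapEigs G i)⁻¹ := by
  classical
  have := hG.nonempty
  have h := sq_card_sub_one_le_sum_degree_mul_sum_inv hG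
  rwa [← card_mul_avgDeg, ← lapEigs_eq_eigenvalues, Fintype.card_fin] at h

end LaplacianSpectrum

/-- `(n-1)²/(2 d̃(G) n²) ≤ H*(G) ≤ δ̃(G)(n-1)/(4n)`. -/
theorem stmt_11 {n : ℕ} (hn : 2 ≤ n) (G : SimpleGraph (Fin n)) (hG : G.Connected) :
    ((n : ℝ) - 1)^2 / (2 * avgDeg G * (n : ℝ)^2) ≤ Hstar G ∧
    Hstar G ≤ avgDist G * ((n : ℝ) - 1) / (4 * (n : ℝ)) := by
  have hn1 : (n : ℝ) - 1 ≠ 0 := by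
    have : (2 : ℝ) ≤ n := by exact_mod_cast hn
    linarith
  constructor
  · refine div_le_of_le_mul₀ (by have := avgDeg_nonneg G; positivity) (Hstar_nonneg G) ?_
    calc ((n : ℝ) - 1) ^ 2 ≤ n * avgDeg G * ∑ i, (lapEigs G i)⁻¹ :=
          sq_sub_one_le_mul_avgDeg_mul_sum_inv_lapEigs hG
      _ = Hstar G * (2 * avgDeg G * n ^ 2) := by
          rw [Hstar]
          field_simp
  · calc Hstar G = Kf G / (2 * n ^ 2) := by
          rw [Hstar, Kf]
          field_simp
      _ ≤ distSum G / (2 * n ^ 2) := by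
          gcongr
          exact Kf_le_distSum hG
      _ = avgDist G * (n - 1) / (4 * n) := by
          rw [avgDist]
          field_simp
          ring
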